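/- For every infinite-dimensional Banach space X and every α ∈ (0,1], the α-Hölder extension constant λ_α(X, c₀) is at least κ(X)^α, where κ(X) is the Kottman constant of X. -/

import Mathlib

open Set Filter
open scoped ENNReal NNReal

noncomputable section

/-- The Kottman constant of a normed space: the supremum of separation constants
`sep (xₙ) = inf_{n ≠ m} ‖xₙ - xₘ‖` over sequences `(xₙ)` in the closed unit ball. -/
def kottman (X : Type*) [SeminormedAddGroup X] : ℝ :=
  sSup {r : ℝ | ∃ x : ℕ → X, (∀ n, ‖x n‖ ≤ 1) ∧ ∀ n m, n ≠ m → r ≤ ‖x n - x m‖}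

/-- `f` is α-Hölder with constant `K` on the set `M` (real exponent, via `Real.rpow`). -/
def HolderOnR {X Y : Type*} [SeminormedAddGroup X] [SeminormedAddGroup Y]
    (K α : ℝ) (f : X → Y) (M : Set X) : Prop :=
  ∀ x ∈ M, ∀ y ∈ M, ‖f x - f y‖ ≤ K * ‖x - y‖ ^ α

/-- `f` is globally α-Hölder with constant `K`. -/
def HolderR {X Y : Type*} [SeminormedAddGroup X] [SeminormedAddGroup Y]
    (K α : ℝ) (f : X → Y) : Prop :=
  ∀ x y, ‖f x - f y‖ ≤ K * ‖x - y‖ ^ α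

/-- The α-Hölder extension property with constant `l`: every α-Hölder map from a subset
of `X` into `Y` extends to `X` with Hölder constant multiplied by at most `l`. -/
def ExtProp (l α : ℝ) (X Y : Type*) [SeminormedAddGroup X] [SeminormedAddGroup Y] : Prop :=
  ∀ (M : Set X) (f : X → Y) (K : ℝ), 0 ≤ K → HolderOnR K α f M →
    ∃ F : X → Y, Set.EqOn F f M ∧ ∃ K' : ℝ, 0 ≤ K' ∧ HolderR K' α F ∧ K' ≤ l * K

/-- `λ_α(X, Y)`: the optimal α-Hölder extension constant from subsets of `X` into `Y`
(`∞` if no finite constant works). -/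
def holderExt (α : ℝ) (X Y : Type*) [SeminormedAddGroup X] [SeminormedAddGroup Y] : ℝ≥0∞ :=
  sInf {L : ℝ≥0∞ | ∃ l : ℝ, 0 ≤ l ∧ L = ENNReal.ofReal l ∧ ExtProp l α X Y}

/-- The Banach space `c₀` of real null sequences with the sup norm. -/
abbrev czero : Type := ZeroAtInftyContinuousMap ℕ ℝ

/-- The canonical unit vector basis of `c₀`. -/
def e (n : ℕ) : czero where
  toFun := fun m => if m = n then 1 else 0
  continuous_toFun := continuous_of_discreteTopology
  zero_at_infty' := by
    rw [Filter.cocompact_eq_cofinite, Nat.cofinite_eq_atTop]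
    refine Tendsto.congr' ?_ tendsto_const_nhds
    filter_upwards [Filter.eventually_gt_atTop n] with m hm
    simp [Nat.ne_of_gt hm]

/-!
Take an `r`-separated sequence `(xₙ)` in the unit ball and send `xₙ ↦ r^α eₙ ∈ c₀`; this map is
`1`-Hölder on `{xₙ}`. An extension `F` with Hölder constant `K` satisfies `‖F 0 - r^α eₙ‖ ≤ K` for
every `n`, and since the `n`-th coordinate of `F 0` tends to `0`, this forces `r^α ≤ K`.
Taking the supremum over `r` concludes.
-/

open Topology

@[simp]
lemma e_apply (n m : ℕ) : e n m = if m = n then 1 else 0 := rfl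

lemma czero_norm_apply_le (g : czero) (n : ℕ) : ‖g n‖ ≤ ‖g‖ := by
  rw [← ZeroAtInftyContinuousMap.norm_toBCF_eq_norm]
  exact g.toBCF.norm_coe_le_norm n

lemma czero_norm_le {g : czero} {C : ℝ} (hC : 0 ≤ C) (h : ∀ n, ‖g n‖ ≤ C) : ‖g‖ ≤ C := by
  rw [← ZeroAtInftyContinuousMap.norm_toBCF_eq_norm]
  exact (BoundedContinuousFunction.norm_le hC).2 h

lemma czero_tendsto_atTop (g : czero) : Tendsto g atTop (𝓝 0) := by
  simpa [cocompact_eq_cofinite, Nat.cofinite_eq_atTop] using g.zero_at_infty'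

lemma norm_e_sub_e_le_one (n m : ℕ) : ‖e n - e m‖ ≤ 1 :=
  czero_norm_le zero_le_one fun k => by
    rcases eq_or_ne k n with rfl | hkn <;> rcases eq_or_ne k m with rfl | hkm <;> simp [*]

lemma abs_le_of_forall_norm_sub_smul_e_le {g : czero} {c K : ℝ}
    (h : ∀ n, ‖g - c • e n‖ ≤ K) : |c| ≤ K := by
  have hcoord : ∀ n, |g n - c| ≤ K := fun n => by
    simpa using (czero_norm_apply_le (g - c • e n) n).trans (h n)
  have hlim : Tendsto (fun n => |g n - c|) atTop (𝓝 |0 - c|) :=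
    ((czero_tendsto_atTop g).sub tendsto_const_nhds).abs
  simpa using le_of_tendsto' hlim hcoord

lemma norm_sub_le_of_holderR {X Y : Type*} [SeminormedAddGroup X] [SeminormedAddGroup Y]
    {K α : ℝ} {F : X → Y} (hF : HolderR K α F) (hK : 0 ≤ K) (hα : 0 ≤ α) {x y : X}
    (hxy : ‖x - y‖ ≤ 1) : ‖F x - F y‖ ≤ K :=
  calc ‖F x - F y‖ ≤ K * ‖x - y‖ ^ α := hF x y
    _ ≤ K * 1 := by gcongr; exact Real.rpow_le_one (norm_nonneg _) hxy hα
    _ = K := mul_one K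

section Separated

variable {X : Type*} [NormedAddCommGroup X] {r : ℝ} {x : ℕ → X}

lemma injective_of_separated (hr : 0 < r) (hsep : ∀ n m, n ≠ m → r ≤ ‖x n - x m‖) :
    Function.Injective x := by
  intro n m hnm
  by_contra hne
  have := hsep n m hne
  rw [hnm, sub_self, norm_zero] at this
  linarith

lemma holderOnR_range_of_eq_smul_e {α c : ℝ} {f : X → czero} (hα : 0 ≤ α) (hr : 0 ≤ r)
    (hsep : ∀ n m, n ≠ m → r ≤ ‖x n - x m‖) (hc : 0 ≤ c) (hcr : c ≤ r ^ α)
    (hf : ∀ n, f (x n) = c • e n) : HolderOnR 1 α f (range x) := by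
  rintro _ ⟨n, rfl⟩ _ ⟨m, rfl⟩
  rw [hf, hf, one_mul]
  rcases eq_or_ne n m with rfl | hnm
  · simp only [sub_self, norm_zero]
    positivity
  calc ‖c • e n - c • e m‖ = c * ‖e n - e m‖ := by
        rw [← norm_smul_of_nonneg hc, smul_sub]
    _ ≤ c * 1 := by gcongr; exact norm_e_sub_e_le_one n m
    _ ≤ r ^ α := by rwa [mul_one]
    _ ≤ ‖x n - x m‖ ^ α := Real.rpow_le_rpow hr (hsep n m hnm) hα

lemma rpow_le_of_extProp {α l : ℝ} (hα : 0 < α) (hr : 0 < r) (hx : ∀ n, ‖x n‖ ≤ 1)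
    (hsep : ∀ n m, n ≠ m → r ≤ ‖x n - x m‖) (hExt : ExtProp l α X czero) : r ^ α ≤ l := by
  have hc : 0 ≤ r ^ α := Real.rpow_nonneg hr.le α
  let f : X → czero := Function.extend x (fun n => r ^ α • e n) 0
  have hf : ∀ n, f (x n) = r ^ α • e n :=
    (injective_of_separated hr hsep).extend_apply _ _
  obtain ⟨F, hFf, K, hK, hF, hKl⟩ := hExt (range x) f 1 zero_le_one
    (holderOnR_range_of_eq_smul_e hα.le hr.le hsep hc le_rfl hf)
  have hFK : ∀ n, ‖F 0 - r ^ α • e n‖ ≤ K := fun n => by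
    rw [← hf, ← hFf (mem_range_self n)]
    exact norm_sub_le_of_holderR hF hK hα.le (by simpa using hx n)
  have := abs_le_of_forall_norm_sub_smul_e_le hFK
  rw [abs_of_nonneg hc] at this
  linarith

end Separated

section Kottman

variable (X : Type*) [SeminormedAddGroup X]

lemma kottman_set_bddAbove :
    BddAbove {r : ℝ | ∃ x : ℕ → X, (∀ n, ‖x n‖ ≤ 1) ∧ ∀ n m, n ≠ m → r ≤ ‖x n - x m‖} := by
  refine ⟨2, ?_⟩
  rintro r ⟨x, hx, hsep⟩
  calc r ≤ ‖x 0 - x 1‖ := hsep 0 1 one_ne_zero.symm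
    _ ≤ ‖x 0‖ + ‖x 1‖ := norm_sub_le _ _
    _ ≤ 2 := by linarith [hx 0, hx 1]

lemma kottman_nonneg : 0 ≤ kottman X :=
  le_csSup (kottman_set_bddAbove X) ⟨0, fun _ => by simp, fun _ _ _ => by simp⟩

variable {X}

lemma kottman_le {s : ℝ} (hs : 0 ≤ s)
    (h : ∀ r > 0, ∀ x : ℕ → X, (∀ n, ‖x n‖ ≤ 1) → (∀ n m, n ≠ m → r ≤ ‖x n - x m‖) → r ≤ s) :
    kottman X ≤ s := by
  refine csSup_le ⟨0, fun _ => 0, fun _ => by simp, fun _ _ _ => by simp⟩ ?_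
  rintro r ⟨x, hx, hsep⟩
  rcases le_or_gt r 0 with hr | hr
  · exact hr.trans hs
  · exact h r hr x hx hsep

end Kottman

theorem statement0_general (X : Type*) [NormedAddCommGroup X] (α : ℝ) (hα0 : 0 < α) :
    ENNReal.ofReal (kottman X ^ α) ≤ holderExt α X czero := by
  refine le_sInf ?_
  rintro _ ⟨l, hl, rfl, hExt⟩
  refine ENNReal.ofReal_le_ofReal <|
    (Real.le_rpow_inv_iff_of_pos (kottman_nonneg X) hl hα0).1 <| kottman_le (by positivity) ?_
  intro r hr x hx hsep
  exact (Real.le_rpow_inv_iff_of_pos hr.le hl hα0).2 (rpow_le_of_extProp hα0 hr hx hsep hExt)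

/-- For every infinite-dimensional Banach space `X` and every `α ∈ (0, 1]`,
`κ(X)^α ≤ λ_α(X, c₀)`. -/
theorem statement0 (X : Type*) [NormedAddCommGroup X] [NormedSpace ℝ X] [CompleteSpace X]
    (hX : ¬ FiniteDimensional ℝ X) (α : ℝ) (hα0 : 0 < α) (hα1 : α ≤ 1) :
    ENNReal.ofReal (kottman X ^ α) ≤ holderExt α X czero :=
  statement0_general X α hα0
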